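/- Any probability distribution P on a finite set X that maximizes the entropy -∑_x P(x) log P(x) subject to linear constraints ∑_x P(x) f_i(x) = d_i (for i = 1,...,k) and ∑_x P(x) = 1, with P(x) > 0 for all x, has the exponential family form P(x) = exp(μ - 1 + ∑_i λ_i f_i(x)) for some real numbers μ, λ_1, ..., λ_k. -/

import Mathlib

/-!
At a maximiser with full support, moving along any direction `u` that preserves the constraints
(`∑ u = 0` and `∑ u fᵢ = 0`) keeps us feasible for small times, so the derivative of the entropy
along `u`, namely `-∑ u (log P + 1) = -∑ u log P`, vanishes. Thus `log P` is orthogonal to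
everything orthogonal to `1, f₁, …, f_k`, and finite-dimensional duality puts it in their span.
-/

open Matrix Real Filter

theorem exists_eq_sum_smul_of_dotProduct_eq_zero {ι X 𝕜 : Type*} [Field 𝕜] [Fintype ι]
    [Fintype X] {g : ι → X → 𝕜} {w : X → 𝕜}
    (h : ∀ u, (∀ i, u ⬝ᵥ g i = 0) → u ⬝ᵥ w = 0) : ∃ c : ι → 𝕜, w = ∑ i, c i • g i := by
  classical
  let dual (v : X → 𝕜) : (X → 𝕜) →ₗ[𝕜] 𝕜 := (dotProductBilin 𝕜 𝕜).flip v
  have hker : ⨅ i, LinearMap.ker (dual (g i)) ≤ LinearMap.ker (dual w) := fun u hu ↦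
    h u fun i ↦ (Submodule.mem_iInf _).1 hu i
  obtain ⟨c, hc⟩ :=
    (Submodule.mem_span_range_iff_exists_fun 𝕜).1 (mem_span_of_iInf_ker_le_ker hker)
  refine ⟨c, funext fun x ↦ ?_⟩
  simpa [dual] using (LinearMap.congr_fun hc (Pi.single x 1)).symm

section Perturbation

variable {X : Type*} {P : X → ℝ}

theorem eventually_nonneg_add_mul [Finite X] (hP : ∀ x, 0 < P x) (u : X → ℝ) :
    ∀ᶠ t in nhds (0 : ℝ), ∀ x, 0 ≤ P x + t * u x := by
  refine eventually_all.2 fun x ↦ ?_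
  have : Tendsto (fun t : ℝ ↦ P x + t * u x) (nhds 0) (nhds (P x)) :=
    (by fun_prop : Continuous fun t : ℝ ↦ P x + t * u x).tendsto' 0 (P x) (by simp)
  exact (this.eventually (lt_mem_nhds (hP x))).mono fun _ ↦ le_of_lt

variable [Fintype X]

theorem hasDerivAt_sum_negMulLog_add_mul (hP : ∀ x, P x ≠ 0) (u : X → ℝ) :
    HasDerivAt (fun t ↦ ∑ x, negMulLog (P x + t * u x)) (-∑ x, u x * (log (P x) + 1)) 0 := by
  rw [← Finset.sum_neg_distrib]
  refine HasDerivAt.fun_sum fun x _ ↦ ?_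
  have := (hasDerivAt_negMulLog (hP x)).comp_of_eq (0 : ℝ)
    (((hasDerivAt_id 0).mul_const (u x)).const_add (P x)) (by simp)
  exact this.congr_deriv (by ring)

theorem dotProduct_log_eq_zero_of_isLocalMax {u : X → ℝ} (hP : ∀ x, 0 < P x)
    (hu : ∑ x, u x = 0) (hmax : IsLocalMax (fun t ↦ ∑ x, negMulLog (P x + t * u x)) 0) :
    u ⬝ᵥ (log ∘ P) = 0 := by
  have := hmax.hasDerivAt_eq_zero (hasDerivAt_sum_negMulLog_add_mul (fun x ↦ (hP x).ne') u)
  simpa [dotProduct, mul_add, Finset.sum_add_distrib, hu] using this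

end Perturbation

theorem maxent_exponential_family_general
    {X : Type*} [Fintype X] {k : ℕ}
    (f : Fin k → X → ℝ) (d : Fin k → ℝ) (P : X → ℝ)
    (hpos : ∀ x, 0 < P x)
    (hsum : ∑ x, P x = 1)
    (hcon : ∀ i, ∑ x, P x * f i x = d i)
    (hmax : ∀ Q : X → ℝ, (∀ x, 0 ≤ Q x) → ∑ x, Q x = 1 →
      (∀ i, ∑ x, Q x * f i x = d i) →
      -∑ x, Q x * Real.log (Q x) ≤ -∑ x, P x * Real.log (P x)) :
    ∃ (μ : ℝ) (lam : Fin k → ℝ), ∀ x, P x = Real.exp (μ - 1 + ∑ i, lam i * f i x) := by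
  have hcrit (u : X → ℝ) (hu : ∀ o : Option (Fin k), u ⬝ᵥ o.elim 1 f = 0) :
      u ⬝ᵥ (log ∘ P) = 0 := by
    have hu1 : ∑ x, u x = 0 := by simpa [dotProduct_one] using hu none
    have huf (i : Fin k) : u ⬝ᵥ f i = 0 := hu (some i)
    refine dotProduct_log_eq_zero_of_isLocalMax hpos hu1 ?_
    filter_upwards [eventually_nonneg_add_mul hpos u] with t ht
    have := hmax (P + t • u) ht (by simp [Finset.sum_add_distrib, ← Finset.mul_sum, hsum, hu1])
      fun i ↦ by
        change (P + t • u) ⬝ᵥ f i = d i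
        rw [add_dotProduct, smul_dotProduct, huf i, smul_zero, add_zero, ← hcon i]; rfl
    simpa only [negMulLog, neg_mul, Finset.sum_neg_distrib, zero_mul, add_zero, Pi.add_apply,
      Pi.smul_apply, smul_eq_mul] using this
  obtain ⟨c, hc⟩ := exists_eq_sum_smul_of_dotProduct_eq_zero hcrit
  refine ⟨c none + 1, fun i ↦ c (some i), fun x ↦ ?_⟩
  rw [← exp_log (hpos x), show log (P x) = _ from congr_fun hc x]
  simp [Fintype.sum_option]

/-- Any full-support probability distribution on a finite set maximizing
entropy subject to linear constraints has exponential-family form. -/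
theorem maxent_exponential_family
    {X : Type*} [Fintype X] [Nonempty X] {k : ℕ}
    (f : Fin k → X → ℝ) (d : Fin k → ℝ) (P : X → ℝ)
    (hpos : ∀ x, 0 < P x)
    (hsum : ∑ x, P x = 1)
    (hcon : ∀ i, ∑ x, P x * f i x = d i)
    (hmax : ∀ Q : X → ℝ, (∀ x, 0 ≤ Q x) → ∑ x, Q x = 1 →
      (∀ i, ∑ x, Q x * f i x = d i) →
      -∑ x, Q x * Real.log (Q x) ≤ -∑ x, P x * Real.log (P x)) :
    ∃ (μ : ℝ) (lam : Fin k → ℝ), ∀ x, P x = Real.exp (μ - 1 + ∑ i, lam i * f i x) :=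
  maxent_exponential_family_general f d P hpos hsum hcon hmax
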